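/- arXiv:2108.00492 — 5 statements merged into one kernel-verified Lean document; each statement's English description precedes it below -/
import Mathlib

section
/- Let U be an n×n upper triangular real matrix with positive diagonal entries u_{ii}, and let a_1,...,a_n ∈ (0,∞]. Then ∫_{-a_n}^{a_n} ··· ∫_{-a_1}^{a_1} exp(-‖Uξ‖₂²) dξ_1 ··· dξ_n ≤ ∏_{i=1}^n ∫_{-a_i}^{a_i} exp(-u_{ii}² t²) dt. -/
/-! Since `U` is upper triangular, `ξ₀` enters only the first coordinate of `Uξ`, so
`‖Uξ‖² = (u₀₀ ξ₀ + c(ξ'))² + ‖U'ξ'‖²`, where `U'` is the lower-right block of `U` and `c(ξ')`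
depends only on the remaining coordinates `ξ'`. Integrate out `ξ₀` first: over `ℝ` the shift
`c(ξ')` does not change the one-dimensional Gaussian integral, and over a centred interval it can
only decrease it, because a symmetric function decreasing in `|s|` has the most mass on the
centred window. Induction on `n` finishes the proof. -/

open MeasureTheory Real Finset Matrix

section SymmetricDecreasing

variable {f : ℝ → ℝ}

theorem intervalIntegral_shift_le_of_nonneg (hf : ∀ x y, |x| ≤ |y| → f y ≤ f x)
    (hfi : ∀ a b, IntervalIntegrable f volume a b) {b c : ℝ} (hb : 0 ≤ b) (hc : 0 ≤ c) :
    ∫ s in (c - b)..(c + b), f s ≤ ∫ s in (-b)..b, f s := by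
  -- Both sides contain `[c - b, b]`; what remains on the left, `[b, c + b]`, is the translate by
  -- `2b` of what remains on the right, `[-b, c - b]`, and on the latter `|s| ≤ |s + 2b|`.
  have split_left :=
    intervalIntegral.integral_add_adjacent_intervals (hfi (c - b) b) (hfi b (c + b))
  have split_right :=
    intervalIntegral.integral_add_adjacent_intervals (hfi (-b) (c - b)) (hfi (c - b) b)
  have shift : ∫ s in b..(c + b), f s = ∫ s in (-b)..(c - b), f (s + 2 * b) := by
    rw [intervalIntegral.integral_comp_add_right]; ring_nf
  have shift_le : ∫ s in (-b)..(c - b), f (s + 2 * b) ≤ ∫ s in (-b)..(c - b), f s := by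
    have shifted_integrable := (hfi b (c + b)).comp_add_right (2 * b)
    rw [show b - 2 * b = -b by ring, show c + b - 2 * b = c - b by ring] at shifted_integrable
    refine intervalIntegral.integral_mono_on (by linarith) shifted_integrable (hfi _ _)
      fun s hs => hf _ _ ?_
    rw [abs_of_nonneg (by linarith [hs.1] : 0 ≤ s + 2 * b)]
    exact abs_le.2 ⟨by linarith [hs.1], by linarith [hs.1]⟩
  linarith

theorem intervalIntegral_shift_le (hf : ∀ x y, |x| ≤ |y| → f y ≤ f x)
    (hfi : ∀ a b, IntervalIntegrable f volume a b) {b : ℝ} (hb : 0 ≤ b) (c : ℝ) :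
    ∫ s in (c - b)..(c + b), f s ≤ ∫ s in (-b)..b, f s := by
  rcases le_total 0 c with hc | hc
  · exact intervalIntegral_shift_le_of_nonneg hf hfi hb hc
  · have f_neg : ∀ s, f (-s) = f s := fun s =>
      le_antisymm (hf _ _ (abs_neg s).ge) (hf _ _ (abs_neg s).le)
    have reflect := intervalIntegral.integral_comp_neg (a := c - b) (b := c + b) f
    simp only [f_neg] at reflect
    rw [reflect, show -(c + b) = -c - b by ring, show -(c - b) = -c + b by ring]
    exact intervalIntegral_shift_le_of_nonneg hf hfi hb (neg_nonneg.2 hc)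

theorem setIntegral_Icc_comp_mul_add_le (hf : ∀ x y, |x| ≤ |y| → f y ≤ f x)
    (hfi : ∀ a b, IntervalIntegrable f volume a b) {u : ℝ} (hu : 0 < u) (c : ℝ) {a : ℝ}
    (ha : 0 ≤ a) :
    ∫ t in Set.Icc (-a) a, f (u * t + c) ≤ ∫ t in Set.Icc (-a) a, f (u * t) := by
  simp only [integral_Icc_eq_integral_Ioc, ← intervalIntegral.integral_of_le (neg_le_self ha),
    intervalIntegral.integral_comp_mul_add f hu.ne',
    intervalIntegral.integral_comp_mul_left f hu.ne', smul_eq_mul]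
  refine mul_le_mul_of_nonneg_left ?_ (inv_nonneg.2 hu.le)
  rw [show u * -a + c = c - u * a by ring, add_comm _ c, mul_neg]
  exact intervalIntegral_shift_le hf hfi (mul_nonneg hu.le ha) c

end SymmetricDecreasing

theorem lintegral_exp_neg_sq_comp_mul_add_le {u : ℝ} (hu : 0 < u) (c : ℝ) {S : Set ℝ}
    (hS : (∃ a : ℝ, 0 < a ∧ S = Set.Icc (-a) a) ∨ S = Set.univ) :
    ∫⁻ t in S, ENNReal.ofReal (exp (-(u * t + c) ^ 2))
      ≤ ∫⁻ t in S, ENNReal.ofReal (exp (-u ^ 2 * t ^ 2)) := by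
  simp_rw [neg_mul, ← mul_pow]
  rcases hS with ⟨a, ha, rfl⟩ | rfl
  · rw [← ofReal_integral_eq_lintegral_ofReal (by fun_prop : Continuous _).integrableOn_Icc
        (ae_of_all _ fun _ => (exp_pos _).le),
      ← ofReal_integral_eq_lintegral_ofReal (by fun_prop : Continuous _).integrableOn_Icc
        (ae_of_all _ fun _ => (exp_pos _).le)]
    refine ENNReal.ofReal_le_ofReal (setIntegral_Icc_comp_mul_add_le (f := fun s => exp (-s ^ 2))
      (fun x y hxy => exp_le_exp.2 (neg_le_neg (sq_le_sq.2 hxy)))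
      (fun _ _ => (by fun_prop : Continuous _).intervalIntegrable _ _) hu c ha.le)
  · refine le_of_eq ?_
    simp_rw [Measure.restrict_univ, show ∀ t, u * t + c = u * (t + c / u) by
      intro t; field_simp]
    exact lintegral_add_right_eq_self (fun t => ENNReal.ofReal (exp (-(u * t) ^ 2))) (c / u)

theorem lintegral_pi_fin_succ {n : ℕ} {α : Type*} [MeasurableSpace α]
    (μ : Fin (n + 1) → Measure α) [∀ i, SigmaFinite (μ i)]
    {F : (Fin (n + 1) → α) → ENNReal} (hF : Measurable F) :
    ∫⁻ ξ, F ξ ∂Measure.pi μ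
      = ∫⁻ y, ∫⁻ x, F (Fin.cons x y) ∂μ 0 ∂Measure.pi fun j => μ j.succ := by
  have e := (measurePreserving_piFinSuccAbove μ 0).symm
  rw [← e.lintegral_comp_emb (MeasurableEquiv.measurableEmbedding _)]
  refine (lintegral_prod_symm' _ (hF.comp (MeasurableEquiv.measurable _))).trans ?_
  simp only [Fin.zero_succAbove, MeasurableEquiv.piFinSuccAbove_symm_apply,
    Fin.insertNthEquiv_zero, Fin.consEquiv, Equiv.coe_fn_mk, Function.comp_apply]

theorem Matrix.BlockTriangular.submatrix_succ {n : ℕ} {R : Type*} [Zero R]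
    {U : Matrix (Fin (n + 1)) (Fin (n + 1)) R} (hU : U.BlockTriangular id) :
    (U.submatrix Fin.succ Fin.succ).BlockTriangular id :=
  fun _ _ h => hU (Fin.succ_lt_succ_iff.2 h)

theorem sum_sq_mulVec_cons {n : ℕ} {U : Matrix (Fin (n + 1)) (Fin (n + 1)) ℝ}
    (hU : U.BlockTriangular id) (x : ℝ) (y : Fin n → ℝ) :
    ∑ i, (U *ᵥ Fin.cons x y) i ^ 2
      = (U 0 0 * x + ∑ j, U 0 j.succ * y j) ^ 2
        + ∑ i, (U.submatrix Fin.succ Fin.succ *ᵥ y) i ^ 2 := by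
  have first_col : ∀ i : Fin n, U i.succ 0 = 0 := fun i => hU (Fin.succ_pos i)
  simp [Fin.sum_univ_succ, Matrix.mulVec, dotProduct, first_col]

theorem integral_exp_eq_toReal_lintegral {α : Type*} [MeasurableSpace α] {μ : Measure α}
    {g : α → ℝ} (hg : Measurable g) :
    ∫ x, exp (g x) ∂μ = (∫⁻ x, ENNReal.ofReal (exp (g x)) ∂μ).toReal :=
  integral_eq_lintegral_of_nonneg_ae (ae_of_all _ fun _ => (exp_pos _).le)
    hg.exp.aestronglyMeasurable

theorem lintegral_exp_neg_sum_sq_mulVec_le {n : ℕ} {U : Matrix (Fin n) (Fin n) ℝ}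
    (hU : U.BlockTriangular id) (hd : ∀ i, 0 < U i i) {S : Fin n → Set ℝ}
    (hS : ∀ i, (∃ c : ℝ, 0 < c ∧ S i = Set.Icc (-c) c) ∨ S i = Set.univ) :
    ∫⁻ ξ in Set.univ.pi S, ENNReal.ofReal (exp (-∑ i, (U *ᵥ ξ) i ^ 2))
      ≤ ∏ i, ∫⁻ t in S i, ENNReal.ofReal (exp (-(U i i) ^ 2 * t ^ 2)) := by
  induction n with
  | zero =>
    simp only [univ_eq_empty, sum_empty, prod_empty, neg_zero, exp_zero, ENNReal.ofReal_one,
      setLIntegral_one]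
    exact (measure_mono (Set.subset_univ _)).trans (by simp [volume_pi])
  | succ n ih =>
    have tail := ih hU.submatrix_succ (fun i => hd i.succ) (fun i => hS i.succ)
    rw [volume_pi, Measure.restrict_pi_pi] at tail ⊢
    rw [lintegral_pi_fin_succ _ (by fun_prop)]
    simp_rw [sum_sq_mulVec_cons hU, neg_add, exp_add, ENNReal.ofReal_mul (exp_pos _).le]
    set ρ := Measure.pi fun j : Fin n => volume.restrict (S j.succ)
    set U' := U.submatrix Fin.succ Fin.succ
    set C : (Fin n → ℝ) → ℝ := fun y => ∑ j, U 0 j.succ * y j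
    set K : (Fin n → ℝ) → ENNReal := fun y => ENNReal.ofReal (exp (-∑ i, (U' *ᵥ y) i ^ 2))
    set I₀ := ∫⁻ t in S 0, ENNReal.ofReal (exp (-(U 0 0) ^ 2 * t ^ 2))
    calc _ = ∫⁻ y, (∫⁻ x in S 0, ENNReal.ofReal (exp (-(U 0 0 * x + C y) ^ 2))) * K y ∂ρ :=
          lintegral_congr fun y => lintegral_mul_const _ (by fun_prop)
      _ ≤ ∫⁻ y, I₀ * K y ∂ρ :=
          lintegral_mono fun y => mul_le_mul_left
            (lintegral_exp_neg_sq_comp_mul_add_le (hd 0) (C y) (hS 0)) _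
      _ = I₀ * ∫⁻ y, K y ∂ρ := lintegral_const_mul _ (by fun_prop)
      _ ≤ I₀ * ∏ i : Fin n, ∫⁻ t in S i.succ, ENNReal.ofReal (exp (-(U' i i) ^ 2 * t ^ 2)) :=
          mul_le_mul_right tail _
      _ = _ := by rw [Fin.prod_univ_succ]; rfl

/-- Gaussian box-integral inequality for upper triangular matrices with
positive diagonal: the integral of `exp (-‖Uξ‖₂²)` over a (possibly
partially infinite) centered box is at most the product of the
corresponding one-dimensional Gaussian integrals with variances given by
the diagonal entries. -/
theorem stmt_0 (n : ℕ) (U : Matrix (Fin n) (Fin n) ℝ)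
    (hU : U.BlockTriangular id) (hd : ∀ i, 0 < U i i)
    (S : Fin n → Set ℝ)
    (hS : ∀ i, (∃ c : ℝ, 0 < c ∧ S i = Set.Icc (-c) c) ∨ S i = Set.univ) :
    (∫ ξ in Set.univ.pi S, Real.exp (-(∑ i, (U.mulVec ξ i) ^ 2)))
      ≤ ∏ i, ∫ t in S i, Real.exp (-(U i i) ^ 2 * t ^ 2) := by
  have factor_ne_top : ∀ i, ∫⁻ t in S i, ENNReal.ofReal (exp (-(U i i) ^ 2 * t ^ 2)) ≠ ⊤ :=
    fun i => ((integrable_exp_neg_mul_sq (pow_pos (hd i) 2)).integrableOn.lintegral_lt_top).ne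
  have factor_eq : ∀ i, ∫ t in S i, exp (-(U i i) ^ 2 * t ^ 2)
      = (∫⁻ t in S i, ENNReal.ofReal (exp (-(U i i) ^ 2 * t ^ 2))).toReal :=
    fun i => integral_exp_eq_toReal_lintegral (by fun_prop)
  rw [integral_exp_eq_toReal_lintegral (by fun_prop), prod_congr rfl fun i _ => factor_eq i,
    ← ENNReal.toReal_prod]
  exact ENNReal.toReal_mono (ENNReal.prod_ne_top fun i _ => factor_ne_top i)
    (lintegral_exp_neg_sum_sq_mulVec_le hU hd hS)
end

section
/- Let σ > 0, let R be an n×n upper triangular matrix with positive diagonal entries r_{ii}, and for each i let ℓ_i < u_i be integers. Define φ_σ(ζ) = erf(ζ/(2√2 σ)). Then ∏_{i=1}^n [1 + (u_i - ℓ_i) φ_σ(r_{ii})]/(u_i - ℓ_i + 1) > ∏_{i=1}^n φ_σ(r_{ii}). -/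
open MeasureTheory Real Finset

/-- The Gauss error function `erf x = (2/√π) ∫_0^x exp(-t²) dt`. -/
noncomputable def erf (x : ℝ) : ℝ :=
  (2 / Real.sqrt Real.pi) * ∫ t in (0 : ℝ)..x, Real.exp (-t ^ 2)

/-- `φ_σ(ζ) = erf (ζ / (2√2 σ))`. -/
noncomputable def phi (σ ζ : ℝ) : ℝ := erf (ζ / (2 * Real.sqrt 2 * σ))

lemma integrable_gauss : Integrable (fun t : ℝ => Real.exp (-t ^ 2)) := by
  simpa using integrable_exp_neg_mul_sq (b := (1:ℝ)) one_pos

lemma gauss_int_lt (x : ℝ) :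
    (∫ t in (0 : ℝ)..x, Real.exp (-t ^ 2)) < Real.sqrt Real.pi / 2 := by
  have hpi : 0 < Real.sqrt Real.pi / 2 := by positivity
  rcases le_or_gt x 0 with hx | hx
  · have : (∫ t in (0 : ℝ)..x, Real.exp (-t ^ 2)) ≤ 0 := by
      rw [intervalIntegral.integral_symm]
      simp only [neg_nonpos]
      exact intervalIntegral.integral_nonneg hx (fun u _ => (Real.exp_pos _).le)
    linarith
  · have key : (∫ t in Set.Ioi (0:ℝ), Real.exp (-t ^ 2)) = Real.sqrt Real.pi / 2 := by
      simpa using integral_gaussian_Ioi 1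
    rw [intervalIntegral.integral_of_le hx.le, ← key]
    have hsplit : (∫ t in Set.Ioi (0:ℝ), Real.exp (-t ^ 2))
        = (∫ t in Set.Ioc (0:ℝ) x, Real.exp (-t ^ 2))
          + ∫ t in Set.Ioi x, Real.exp (-t ^ 2) := by
      rw [← setIntegral_union (Set.Ioc_disjoint_Ioi le_rfl) measurableSet_Ioi
        integrable_gauss.integrableOn integrable_gauss.integrableOn,
        Set.Ioc_union_Ioi_eq_Ioi hx.le]
    have hpos : 0 < ∫ t in Set.Ioi x, Real.exp (-t ^ 2) := by
      refine (setIntegral_pos_iff_support_of_nonneg_ae ?_ integrable_gauss.integrableOn).2 ?_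
      · exact Filter.Eventually.of_forall fun t => (Real.exp_pos _).le
      · have : (Function.support fun t : ℝ => Real.exp (-t ^ 2)) = Set.univ := by
          ext t; simp [Function.support, Real.exp_ne_zero]
        rw [this, Set.univ_inter]
        simp [Real.volume_Ioi]
    linarith [hsplit]

lemma erf_lt_one (x : ℝ) : erf x < 1 := by
  have h := gauss_int_lt x
  have hpi : 0 < Real.sqrt Real.pi := Real.sqrt_pos.2 Real.pi_pos
  have := mul_lt_mul_of_pos_left h (show (0:ℝ) < 2 / Real.sqrt Real.pi by positivity)
  calc erf x < 2 / Real.sqrt Real.pi * (Real.sqrt Real.pi / 2) := this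
    _ = 1 := by field_simp
  
lemma erf_pos {x : ℝ} (hx : 0 < x) : 0 < erf x := by
  have : 0 < ∫ t in (0:ℝ)..x, Real.exp (-t ^ 2) := by
    apply intervalIntegral.intervalIntegral_pos_of_pos_on
    · exact integrable_gauss.intervalIntegrable
    · exact fun t _ => Real.exp_pos _
    · exact hx
  have hpi : 0 < Real.sqrt Real.pi := Real.sqrt_pos.2 Real.pi_pos
  unfold erf; positivity

/-- `P_R^BB > P^OB`: the success probability of the box-constrained Babai
detector for a uniformly distributed parameter strictly exceeds that of the
ordinary Babai detector. -/
theorem stmt_3 (n : ℕ) (hn : 0 < n) (σ : ℝ) (hσ : 0 < σ)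
    (R : Matrix (Fin n) (Fin n) ℝ) (hR : R.BlockTriangular id)
    (hd : ∀ i, 0 < R i i) (l u : Fin n → ℤ) (hlu : ∀ i, l i < u i) :
    (∏ i, phi σ (R i i)) <
      ∏ i, (1 + ((u i - l i : ℤ) : ℝ) * phi σ (R i i)) /
        (((u i - l i : ℤ) : ℝ) + 1) := by
  have hne : (Finset.univ : Finset (Fin n)).Nonempty := univ_nonempty_iff.2 (Fin.pos_iff_nonempty.mp hn)
  apply Finset.prod_lt_prod_of_nonempty _ _ hne
  · intro i _
    apply erf_pos
    exact div_pos (hd i) (by positivity)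
  · intro i _
    set p := phi σ (R i i) with hp
    have hp1 : p < 1 := erf_lt_one _
    have hp0 : 0 < p := by
      exact erf_pos (div_pos (hd i) (by positivity))
    have hk : (1:ℝ) ≤ ((u i - l i : ℤ) : ℝ) := by
      exact_mod_cast (by have := hlu i; omega : (1:ℤ) ≤ u i - l i)
    rw [lt_div_iff₀ (by linarith)]
    nlinarith
end

section
/- Let σ > 0 and R an n×n real upper triangular matrix with positive diagonal entries r_{ii}. Then (det R/((√(2π)σ)ⁿ)) ∫_{[-1/2,1/2]ⁿ} exp(-‖Rξ‖₂²/(2σ²)) dξ ≤ ∏_{i=1}^n φ_σ(r_{ii}), where φ_σ(ζ) = erf(ζ/(2√2 σ)). -/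
open MeasureTheory Real Finset

/-!
Integrate out `ξ₀` first. Since `R` is upper triangular, only the first coordinate of `Rξ`
depends on `ξ₀`, and it does so as `r₀₀ ξ₀ + b` with `b` depending on the other coordinates.
For an even function that decreases in `|s|`, the integral over a window of fixed length is
largest when the window is centred at `0`, so the `ξ₀`-integral is at most `∫ g (r₀₀ t) dt` and
induction on `n` bounds the box integral by `∏ᵢ ∫ g (rᵢᵢ t) dt`. For the Gaussian, each factor
scaled by `rᵢᵢ / (√(2π) σ)` is `φ_σ(rᵢᵢ)`.
-/

lemma setIntegral_Icc_eq_intervalIntegral (f : ℝ → ℝ) {a b : ℝ} (hab : a ≤ b) :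
    ∫ t in Set.Icc a b, f t = ∫ t in a..b, f t := by
  rw [intervalIntegral.integral_of_le hab, integral_Icc_eq_integral_Ioc]

namespace Function.Even

variable {g : ℝ → ℝ}

lemma apply_abs (heven : g.Even) (x : ℝ) : g |x| = g x := by
  rcases abs_choice x with h | h <;> rw [h]
  exact heven x

lemma apply_le_apply_zero (heven : g.Even) (hanti : AntitoneOn g (Set.Ici 0)) (x : ℝ) :
    g x ≤ g 0 := by
  rw [← heven.apply_abs]
  exact hanti Set.self_mem_Ici (abs_nonneg x) (abs_nonneg x)

lemma apply_add_le_apply_sub (heven : g.Even) (hanti : AntitoneOn g (Set.Ici 0)) {t a : ℝ}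
    (ht : 0 ≤ t) (ha : 0 ≤ a) : g (t + a) ≤ g (t - a) := by
  rw [← heven.apply_abs (t - a)]
  exact hanti (abs_nonneg (t - a)) (Set.mem_Ici.2 (by linarith))
    (abs_le.2 ⟨by linarith, by linarith⟩)

theorem intervalIntegral_sub_add_le (heven : g.Even) (hanti : AntitoneOn g (Set.Ici 0))
    (hcont : Continuous g) {a : ℝ} (ha : 0 ≤ a) (b : ℝ) :
    ∫ s in (b - a)..(b + a), g s ≤ ∫ s in (-a)..a, g s := by
  wlog hb : 0 ≤ b generalizing b
  · calc ∫ s in (b - a)..(b + a), g s = ∫ s in (-b - a)..(-b + a), g s := by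
          conv_lhs => rw [← funext heven, intervalIntegral.integral_comp_neg]
          ring_nf
      _ ≤ ∫ s in (-a)..a, g s := this (-b) (by linarith)
  -- Moving the window from `[-a, a]` to `[b - a, b + a]` trades `[-a, b - a]` for `[a, b + a]`.
  have hshift : ∫ s in a..(b + a), g s ≤ ∫ s in (-a)..(b - a), g s := by
    have hright := intervalIntegral.integral_comp_add_right g a (a := 0) (b := b)
    have hleft := intervalIntegral.integral_comp_sub_right g a (a := 0) (b := b)
    rw [zero_add] at hright
    rw [zero_sub] at hleft
    rw [← hright, ← hleft]
    exact intervalIntegral.integral_mono_on hb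
      ((by fun_prop : Continuous fun t => g (t + a)).intervalIntegrable _ _)
      ((by fun_prop : Continuous fun t => g (t - a)).intervalIntegrable _ _)
      fun t ht => heven.apply_add_le_apply_sub hanti ht.1 ha
  have hii : ∀ u v, IntervalIntegrable g volume u v := hcont.intervalIntegrable
  have := intervalIntegral.integral_interval_sub_interval_comm' (hii (b - a) (b + a)) (hii (-a) a)
    (hii (b - a) (-a))
  linarith

theorem setIntegral_Icc_comp_mul_add_le (heven : g.Even) (hanti : AntitoneOn g (Set.Ici 0))
    (hcont : Continuous g) {c r : ℝ} (hc0 : 0 ≤ c) (hr : 0 < r) (b : ℝ) :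
    ∫ t in Set.Icc (-c) c, g (r * t + b) ≤ ∫ t in Set.Icc (-c) c, g (r * t) := by
  simp only [setIntegral_Icc_eq_intervalIntegral _ (neg_le_self hc0), smul_eq_mul,
    intervalIntegral.integral_comp_mul_add g hr.ne',
    intervalIntegral.integral_comp_mul_left g hr.ne']
  rw [show r * -c + b = b - r * c by ring, show r * c + b = b + r * c by ring, mul_neg]
  exact mul_le_mul_of_nonneg_left (heven.intervalIntegral_sub_add_le hanti hcont (by positivity) b)
    (by positivity)

lemma intervalIntegral_neg_eq_two_mul {f : ℝ → ℝ} (heven : f.Even) (hcont : Continuous f)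
    (x : ℝ) : ∫ t in (-x)..x, f t = 2 * ∫ t in 0..x, f t := by
  have hleft : ∫ t in (-x)..0, f t = ∫ t in 0..x, f t := by
    conv_lhs => rw [← funext heven, intervalIntegral.integral_comp_neg, neg_zero, neg_neg]
  rw [← intervalIntegral.integral_add_adjacent_intervals (hcont.intervalIntegrable _ 0)
    (hcont.intervalIntegrable 0 _), hleft, two_mul]

end Function.Even

namespace Matrix

variable {m α : Type*} {n : ℕ}

lemma mulVec_cons_apply [NonUnitalNonAssocSemiring α] (A : Matrix m (Fin (n + 1)) α) (t : α)
    (v : Fin n → α) (i : m) :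
    (A *ᵥ Fin.cons t v) i = A i 0 * t + ∑ j, A i j.succ * v j := by
  simp [mulVec, dotProduct, Fin.sum_univ_succ]

lemma BlockTriangular.submatrix_succ_s5 [Zero α] {R : Matrix (Fin (n + 1)) (Fin (n + 1)) α}
    (hR : R.BlockTriangular id) :
    (R.submatrix Fin.succ Fin.succ).BlockTriangular id :=
  fun _ _ hij => hR (Fin.succ_lt_succ_iff.2 hij)

lemma BlockTriangular.mulVec_cons_succ [NonUnitalNonAssocSemiring α]
    {R : Matrix (Fin (n + 1)) (Fin (n + 1)) α} (hR : R.BlockTriangular id) (t : α) (v : Fin n → α)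
    (i : Fin n) :
    (R *ᵥ Fin.cons t v) i.succ = (R.submatrix Fin.succ Fin.succ *ᵥ v) i := by
  have hbelow : R i.succ 0 = 0 := hR (Fin.succ_pos i)
  rw [mulVec_cons_apply, hbelow, zero_mul, zero_add]
  rfl

end Matrix

section BoxIntegral

open Matrix

variable {g : ℝ → ℝ}

lemma integrable_prod_comp_mulVec {ι κ : Type*} [Fintype ι] [Fintype κ] {μ : Measure (ι → ℝ)}
    [IsFiniteMeasure μ] (heven : g.Even) (hanti : AntitoneOn g (Set.Ici 0)) (hcont : Continuous g)
    (hnn : ∀ x, 0 ≤ g x) (R : Matrix κ ι ℝ) :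
    Integrable (fun ξ => ∏ i, g ((R *ᵥ ξ) i)) μ := by
  refine .of_bound (by fun_prop : Continuous _).aestronglyMeasurable (g 0 ^ Fintype.card κ)
    (.of_forall fun ξ => ?_)
  rw [Real.norm_of_nonneg (prod_nonneg fun i _ => hnn _), ← card_univ,
    ← prod_const]
  exact prod_le_prod (fun i _ => hnn _) fun i _ => heven.apply_le_apply_zero hanti _

theorem integral_pi_prod_comp_mulVec_le (heven : g.Even) (hanti : AntitoneOn g (Set.Ici 0))
    (hcont : Continuous g) (hnn : ∀ x, 0 ≤ g x) {c : ℝ} (hc0 : 0 ≤ c) {n : ℕ}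
    (R : Matrix (Fin n) (Fin n) ℝ) (hR : R.BlockTriangular id) (hd : ∀ i, 0 < R i i) :
    ∫ ξ, ∏ i, g ((R *ᵥ ξ) i) ∂(Measure.pi fun _ => volume.restrict (Set.Icc (-c) c))
      ≤ ∏ i, ∫ t in Set.Icc (-c) c, g (R i i * t) := by
  set μ := volume.restrict (Set.Icc (-c) c)
  induction n with
  | zero => simp [measureReal_def]
  | succ n ih =>
    set R' := R.submatrix Fin.succ Fin.succ
    set G : (Fin n → ℝ) → ℝ := fun ξ => ∏ i, g ((R' *ᵥ ξ) i)
    set e := MeasurableEquiv.piFinSuccAbove (fun _ : Fin (n + 1) => ℝ) 0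
    have he : MeasurePreserving e.symm (μ.prod (Measure.pi fun _ => μ)) (Measure.pi fun _ => μ) :=
      (measurePreserving_piFinSuccAbove (fun _ => μ) 0).symm
    have hsplit : ∀ p : ℝ × (Fin n → ℝ), ∏ i, g ((R *ᵥ e.symm p) i)
        = g (R 0 0 * p.1 + ∑ j, R 0 j.succ * p.2 j) * G p.2 := by
      rintro ⟨t, ξ⟩
      simp only [e, MeasurableEquiv.piFinSuccAbove_symm_apply, Fin.insertNthEquiv,
        Equiv.coe_fn_mk, Fin.insertNth_zero']
      rw [Fin.prod_univ_succ, mulVec_cons_apply]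
      simp only [hR.mulVec_cons_succ]
      rfl
    have hint : Integrable (fun p : ℝ × (Fin n → ℝ) =>
        g (R 0 0 * p.1 + ∑ j, R 0 j.succ * p.2 j) * G p.2) (μ.prod (Measure.pi fun _ => μ)) := by
      simpa only [Function.comp_def, hsplit] using
        (he.integrable_comp_emb e.symm.measurableEmbedding).2
          (integrable_prod_comp_mulVec heven hanti hcont hnn R)
    calc ∫ ξ, ∏ i, g ((R *ᵥ ξ) i) ∂(Measure.pi fun _ => μ)
        = ∫ p : ℝ × (Fin n → ℝ), g (R 0 0 * p.1 + ∑ j, R 0 j.succ * p.2 j) * G p.2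
            ∂(μ.prod (Measure.pi fun _ => μ)) := by
          simp only [← he.integral_comp', hsplit]
      _ = ∫ ξ, ∫ t, g (R 0 0 * t + ∑ j, R 0 j.succ * ξ j) * G ξ ∂μ ∂(Measure.pi fun _ => μ) :=
          integral_prod_symm _ hint
      _ ≤ ∫ ξ, (∫ t in Set.Icc (-c) c, g (R 0 0 * t)) * G ξ ∂(Measure.pi fun _ => μ) := by
          refine integral_mono hint.integral_prod_right
            ((integrable_prod_comp_mulVec heven hanti hcont hnn R').const_mul _) fun ξ => ?_
          rw [integral_mul_const]
          exact mul_le_mul_of_nonneg_right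
            (heven.setIntegral_Icc_comp_mul_add_le hanti hcont hc0 (hd 0) _)
            (prod_nonneg fun i _ => hnn _)
      _ ≤ (∫ t in Set.Icc (-c) c, g (R 0 0 * t)) *
            ∏ i, ∫ t in Set.Icc (-c) c, g (R' i i * t) := by
          rw [integral_const_mul]
          exact mul_le_mul_of_nonneg_left (ih R' hR.submatrix_succ_s5 fun i => hd i.succ)
            (setIntegral_nonneg measurableSet_Icc fun t _ => hnn _)
      _ = ∏ i, ∫ t in Set.Icc (-c) c, g (R i i * t) := by rw [Fin.prod_univ_succ]; rfl

end BoxIntegral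

section Gaussian

variable {σ : ℝ}

lemma continuous_exp_neg_sq_div : Continuous fun s : ℝ => exp (-s ^ 2 / (2 * σ ^ 2)) := by
  fun_prop

lemma even_exp_neg_sq_div : Function.Even fun s : ℝ => exp (-s ^ 2 / (2 * σ ^ 2)) :=
  fun s => by simp only [neg_sq]

lemma antitoneOn_exp_neg_sq_div :
    AntitoneOn (fun s : ℝ => exp (-s ^ 2 / (2 * σ ^ 2))) (Set.Ici 0) :=
  fun _ hs _ _ hst => exp_le_exp.2 <| div_le_div_of_nonneg_right
    (neg_le_neg (pow_le_pow_left₀ hs hst 2)) (by positivity)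

lemma exp_neg_sum_sq_div {ι : Type*} (s : Finset ι) (x : ι → ℝ) :
    exp (-(∑ i ∈ s, x i ^ 2) / (2 * σ ^ 2)) = ∏ i ∈ s, exp (-x i ^ 2 / (2 * σ ^ 2)) := by
  rw [← exp_sum, ← sum_div, sum_neg_distrib]

theorem phi_eq_mul_setIntegral (hσ : σ ≠ 0) {r : ℝ} (hr : r ≠ 0) :
    phi σ r = r / (√(2 * π) * σ) *
      ∫ t in Set.Icc (-(1 / 2) : ℝ) (1 / 2), exp (-(r * t) ^ 2 / (2 * σ ^ 2)) := by
  have hscale : r / (√2 * σ) ≠ 0 := by positivity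
  have hsq : ∀ t, -(r * t) ^ 2 / (2 * σ ^ 2) = -(r / (√2 * σ) * t) ^ 2 := fun t => by
    rw [div_mul_eq_mul_div, div_pow, mul_pow √2, sq_sqrt zero_le_two]
    ring
  have hconst : r / (√(2 * π) * σ) * (r / (√2 * σ))⁻¹ = 1 / √π := by
    rw [sqrt_mul zero_le_two]
    field_simp
  have heven : Function.Even fun u : ℝ => exp (-u ^ 2) := fun u => by simp only [neg_sq]
  rw [setIntegral_Icc_eq_intervalIntegral _ (by norm_num)]
  simp only [hsq]
  rw [intervalIntegral.integral_comp_mul_left (fun u => exp (-u ^ 2)) hscale, mul_neg,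
    show r / (√2 * σ) * (1 / 2) = r / (2 * √2 * σ) by ring,
    heven.intervalIntegral_neg_eq_two_mul (by fun_prop), smul_eq_mul, ← mul_assoc, hconst, phi, erf]
  ring

end Gaussian

/-- `P^OR ≤ P^OB`: the success probability of the ordinary rounding detector
is at most that of the ordinary Babai detector. -/
theorem stmt_5 (n : ℕ) (σ : ℝ) (hσ : 0 < σ)
    (R : Matrix (Fin n) (Fin n) ℝ) (hR : R.BlockTriangular id)
    (hd : ∀ i, 0 < R i i) :
    (R.det / (Real.sqrt (2 * Real.pi) * σ) ^ n) *
        ∫ ξ in Set.univ.pi (fun _ : Fin n => Set.Icc (-(1 / 2) : ℝ) (1 / 2)),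
          Real.exp (-(∑ i, (R.mulVec ξ i) ^ 2) / (2 * σ ^ 2))
      ≤ ∏ i, phi σ (R i i) := by
  have hdet : R.det = ∏ i, R i i := Matrix.det_of_isUpperTriangular hR
  have hbox := integral_pi_prod_comp_mulVec_le (even_exp_neg_sq_div (σ := σ))
    antitoneOn_exp_neg_sq_div continuous_exp_neg_sq_div (fun _ => (exp_pos _).le) (c := 1 / 2)
    (by norm_num) R hR hd
  rw [volume_pi, Measure.restrict_pi_pi]
  simp only [exp_neg_sum_sq_div]
  calc R.det / (√(2 * π) * σ) ^ n * _
      ≤ R.det / (√(2 * π) * σ) ^ n *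
          ∏ i, ∫ t in Set.Icc (-(1 / 2) : ℝ) (1 / 2), exp (-(R i i * t) ^ 2 / (2 * σ ^ 2)) := by
        refine mul_le_mul_of_nonneg_left hbox ?_
        rw [hdet]
        exact div_nonneg (prod_pos fun i _ => hd i).le (by positivity)
    _ = ∏ i, R i i / (√(2 * π) * σ) *
          ∫ t in Set.Icc (-(1 / 2) : ℝ) (1 / 2), exp (-(R i i * t) ^ 2 / (2 * σ ^ 2)) := by
        rw [prod_mul_distrib, prod_div_distrib, prod_const, card_univ, Fintype.card_fin, hdet]
    _ = ∏ i, phi σ (R i i) :=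
        prod_congr rfl fun i _ => (phi_eq_mul_setIntegral hσ.ne' (hd i).ne').symm
end

section
/- Let σ > 0, R an n×n upper triangular matrix with positive diagonals r_{ii}, and integers ℓ_i < u_i. Define α_i = 1/(u_i-ℓ_i+1), β_i = (u_i-ℓ_i)/(u_i-ℓ_i+1), and for each choice ω ∈ ∏{α_i, β_i}, let Ī(ω_i) = ℝ if ω_i = α_i and Ī(ω_i) = [-1/2,1/2] if ω_i = β_i. Then (det R/((√(2π)σ)ⁿ)) Σ_{ω} (∏_i ω_i) ∫_{Ī(ω_n)}···∫_{Ī(ω_1)} exp(-‖Rξ‖₂²/(2σ²)) dξ_1···dξ_n ≤ ∏_{i=1}^n [α_i + β_i φ_σ(r_{ii})], where φ_σ(ζ) = erf(ζ/(2√2σ)). -/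
/-!
Expanding the right-hand side `∏ (α_i + β_i φ_σ(r_ii))` over all choices `ω`, it suffices to
bound each box integral separately: the Gaussian mass of `∏ Ī(ω_i)` under `ξ ↦ exp(-‖Rξ‖²/(2σ²))`
is at most `∏ ∫_{Ī(ω_i)} exp(-(r_ii t)²/(2σ²)) dt`. Because `R` is upper triangular, the last
coordinate of `Rξ` is `r_nn ξ_n` and the others form the same problem in dimension `n - 1`,
centred at a point depending on `ξ_n`. Allowing an arbitrary centre, induction on `n` reduces
everything to dimension one, where a symmetric interval carries at least as much mass of a
centred Gaussian as any translate of it. The normalisations `(r/(√(2π)σ)) ∫_ℝ = 1` and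
`(r/(√(2π)σ)) ∫_{-1/2}^{1/2} = φ_σ(r)` then identify the bound term by term.
-/

open MeasureTheory Real Finset

open Matrix

lemma intervalIntegral_sub_add_le_of_even_of_antitoneOn {f : ℝ → ℝ} (hf : Continuous f)
    (h_even : ∀ x, f (-x) = f x) (h_anti : AntitoneOn f (Set.Ici 0)) {h : ℝ} (hh : 0 ≤ h)
    (d : ℝ) : ∫ x in d - h..d + h, f x ≤ ∫ x in -h..h, f x := by
  have hfi : ∀ a b, IntervalIntegrable f volume a b := fun a b => hf.intervalIntegrable a b
  have h_abs : ∀ x, f |x| = f x := fun x => by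
    rcases abs_choice x with hx | hx <;> rw [hx]; exact h_even x
  have h_nonneg : ∀ d, 0 ≤ d → ∫ x in d - h..d + h, f x ≤ ∫ x in -h..h, f x := by
    intro d hd
    -- The two windows differ by `[h, d + h]` versus `[-h, d - h]`, and `|s - h| ≤ s + h`.
    have key : ∫ x in (0 : ℝ)..d, f (x + h) ≤ ∫ x in (0 : ℝ)..d, f (x - h) :=
      intervalIntegral.integral_mono_on hd
        ((hf.comp (continuous_add_const h)).intervalIntegrable _ _)
        ((hf.comp (continuous_sub_right h)).intervalIntegrable _ _) fun x hx => by
          rw [← h_abs (x - h)]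
          exact h_anti (Set.mem_Ici.2 (abs_nonneg _)) (Set.mem_Ici.2 (by linarith [hx.1]))
            (abs_sub_le_iff.2 ⟨by linarith [hx.1], by linarith [hx.1]⟩)
    rw [intervalIntegral.integral_comp_add_right, intervalIntegral.integral_comp_sub_right] at key
    have := intervalIntegral.integral_interval_sub_interval_comm (hfi (-h) h)
      (hfi (d - h) (d + h)) (hfi (-h) (d - h))
    simp only [zero_add, zero_sub, add_comm d h, sub_eq_neg_add d h] at key this ⊢
    linarith
  rcases le_total 0 d with hd | hd
  · exact h_nonneg d hd
  · calc ∫ x in d - h..d + h, f x = ∫ x in -(-d + h)..-(-d - h), f x := by ring_nf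
      _ = ∫ x in -d - h..-d + h, f x := by
          simp only [← intervalIntegral.integral_comp_neg, h_even]
      _ ≤ ∫ x in -h..h, f x := h_nonneg (-d) (neg_nonneg.2 hd)

lemma setIntegral_Icc_comp_mul_add_le_s6 {f : ℝ → ℝ} (hf : Continuous f)
    (h_even : ∀ x, f (-x) = f x) (h_anti : AntitoneOn f (Set.Ici 0)) {a r : ℝ} (ha : 0 ≤ a)
    (hr : 0 < r) (d : ℝ) :
    ∫ t in Set.Icc (-a) a, f (r * t + d) ≤ ∫ t in Set.Icc (-a) a, f (r * t) := by
  have h := intervalIntegral_sub_add_le_of_even_of_antitoneOn hf h_even h_anti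
    (mul_nonneg hr.le ha) d
  simp only [integral_Icc_eq_integral_Ioc, ← intervalIntegral.integral_of_le (neg_le_self ha),
    intervalIntegral.integral_comp_mul_add f hr.ne',
    intervalIntegral.integral_comp_mul_left f hr.ne', smul_eq_mul, mul_neg]
  rw [neg_add_eq_sub, add_comm (r * a) d]
  exact mul_le_mul_of_nonneg_left h (inv_nonneg.2 hr.le)

lemma integral_comp_mul_add_eq_integral_comp_mul (f : ℝ → ℝ) {r : ℝ} (hr : r ≠ 0) (d : ℝ) :
    ∫ t, f (r * t + d) = ∫ t, f (r * t) := by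
  simpa [mul_add, mul_div_cancel₀ d hr] using
    integral_add_right_eq_self (fun t => f (r * t)) (d / r)

section SnocMulVec

variable {α : Type*} [Semiring α] {n : ℕ}

lemma Matrix.mulVec_snoc_castSucc (R : Matrix (Fin (n + 1)) (Fin (n + 1)) α)
    (y : Fin n → α) (t : α) (j : Fin n) :
    (R *ᵥ Fin.snoc y t) j.castSucc
      = (R.submatrix Fin.castSucc Fin.castSucc *ᵥ y) j + R j.castSucc (Fin.last n) * t := by
  simp [Matrix.mulVec, dotProduct, Fin.sum_univ_castSucc]

variable {R : Matrix (Fin (n + 1)) (Fin (n + 1)) α}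

lemma Matrix.IsUpperTriangular.mulVec_snoc_last (hR : R.IsUpperTriangular) (y : Fin n → α)
    (t : α) : (R *ᵥ Fin.snoc y t) (Fin.last n) = R (Fin.last n) (Fin.last n) * t := by
  have h_zero : ∀ j : Fin n, R (Fin.last n) j.castSucc = 0 := fun j => hR (Fin.castSucc_lt_last j)
  simp [Matrix.mulVec, dotProduct, Fin.sum_univ_castSucc, h_zero]

lemma Matrix.IsUpperTriangular.submatrix_castSucc (hR : R.IsUpperTriangular) :
    (R.submatrix Fin.castSucc Fin.castSucc).IsUpperTriangular :=
  fun _ _ hij => hR (Fin.castSucc_lt_castSucc_iff.2 hij)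

lemma Matrix.IsUpperTriangular.prod_mulVec_snoc_add {M : Type*} [CommMonoid M]
    (hR : R.IsUpperTriangular) (f : α → M) (v : Fin (n + 1) → α) (y : Fin n → α) (t : α) :
    ∏ i, f ((R *ᵥ Fin.snoc y t) i + v i)
      = f (R (Fin.last n) (Fin.last n) * t + v (Fin.last n)) *
        ∏ j, f ((R.submatrix Fin.castSucc Fin.castSucc *ᵥ y) j
          + (R j.castSucc (Fin.last n) * t + v j.castSucc)) := by
  rw [Fin.prod_univ_castSucc, mul_comm]
  simp only [R.mulVec_snoc_castSucc, hR.mulVec_snoc_last, add_assoc]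

end SnocMulVec

lemma MeasurableEquiv.piFinSuccAbove_last_symm_apply {α : Type*} [MeasurableSpace α] {n : ℕ}
    (t : α) (y : Fin n → α) :
    (MeasurableEquiv.piFinSuccAbove (fun _ => α) (Fin.last n)).symm (t, y) = Fin.snoc y t := by
  simp [MeasurableEquiv.piFinSuccAbove_symm_apply, Fin.snocEquiv]

lemma preimage_piFinSuccAbove_last_symm_pi {α : Type*} [MeasurableSpace α]
    {n : ℕ} (S : Fin (n + 1) → Set α) :
    (MeasurableEquiv.piFinSuccAbove (fun _ => α) (Fin.last n)).symm ⁻¹' Set.univ.pi S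
      = S (Fin.last n) ×ˢ Set.univ.pi fun j => S j.castSucc := by
  ext ⟨t, y⟩
  simp [Fin.forall_fin_succ', and_comm]

theorem setIntegral_pi_prod_mulVec_add_le {f : ℝ → ℝ} (hf0 : ∀ x, 0 ≤ f x) (hf : Integrable f)
    {n : ℕ} (R : Matrix (Fin n) (Fin n) ℝ) (hR : R.IsUpperTriangular) (hd : ∀ i, R i i ≠ 0)
    (S : Fin n → Set ℝ) (hS : ∀ i, MeasurableSet (S i))
    (hshift : ∀ i d, ∫ t in S i, f (R i i * t + d) ≤ ∫ t in S i, f (R i i * t)) (v : Fin n → ℝ) :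
    ∫ ξ in Set.univ.pi S, ∏ i, f ((R *ᵥ ξ) i + v i) ≤ ∏ i, ∫ t in S i, f (R i i * t) := by
  induction n with
  | zero =>
    rw [show Set.univ.pi S = Set.univ from Set.eq_univ_of_forall fun _ i => i.elim0]
    simp [Measure.real, volume_pi]
  | succ n ih =>
    set e := (MeasurableEquiv.piFinSuccAbove (fun _ : Fin (n + 1) => ℝ) (Fin.last n)).symm
    have he : MeasurePreserving e (volume.prod volume) volume :=
      (volume_preserving_piFinSuccAbove _ _).symm
    set last := Fin.last n
    set R' := R.submatrix Fin.castSucc Fin.castSucc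
    set P := ∏ j, ∫ t in S j.castSucc, f (R' j j * t)
    have hP : 0 ≤ P := prod_nonneg fun j _ => setIntegral_nonneg (hS _) fun _ _ => hf0 _
    rw [← he.setIntegral_preimage_emb e.measurableEmbedding,
      preimage_piFinSuccAbove_last_symm_pi]
    -- A non-integrable integrand has Bochner integral `0`, which is trivially bounded.
    by_cases hint : IntegrableOn (fun p => ∏ i, f ((R *ᵥ e p) i + v i))
      (S last ×ˢ Set.univ.pi fun j => S j.castSucc) (volume.prod volume)
    swap
    · rw [integral_undef hint]
      exact prod_nonneg fun i _ => setIntegral_nonneg (hS i) fun _ _ => hf0 _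
    calc ∫ p in S last ×ˢ Set.univ.pi (fun j => S j.castSucc), ∏ i, f ((R *ᵥ e p) i + v i)
          ∂volume.prod volume
        = ∫ t in S last, f (R last last * t + v last) * ∫ y in Set.univ.pi (fun j => S j.castSucc),
            ∏ j, f ((R' *ᵥ y) j + (R j.castSucc last * t + v j.castSucc)) := by
          simp only [setIntegral_prod _ hint, e, MeasurableEquiv.piFinSuccAbove_last_symm_apply,
            hR.prod_mulVec_snoc_add, integral_const_mul]
          rfl
      _ ≤ ∫ t in S last, f (R last last * t + v last) * P := by
          refine integral_mono_of_nonneg (Filter.Eventually.of_forall fun t => ?_) ?_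
            (Filter.Eventually.of_forall fun t => ?_)
          · exact mul_nonneg (hf0 _) (integral_nonneg fun y => prod_nonneg fun j _ => hf0 _)
          · exact ((hf.comp_add_right _).comp_mul_left' (hd last)).integrableOn.mul_const P
          · exact mul_le_mul_of_nonneg_left (ih R' hR.submatrix_castSucc (fun j => hd _) _
              (fun j => hS _) (fun j => hshift _) _) (hf0 _)
      _ = (∫ t in S last, f (R last last * t + v last)) * P := integral_mul_const _ _
      _ ≤ (∫ t in S last, f (R last last * t)) * P := mul_le_mul_of_nonneg_right (hshift _ _) hP
      _ = ∏ i, ∫ t in S i, f (R i i * t) := by rw [Fin.prod_univ_castSucc, mul_comm]; rfl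

noncomputable def gaussKernel (σ x : ℝ) : ℝ := exp (-x ^ 2 / (2 * σ ^ 2))

lemma gaussKernel_nonneg (σ x : ℝ) : 0 ≤ gaussKernel σ x := (exp_pos _).le

lemma continuous_gaussKernel (σ : ℝ) : Continuous (gaussKernel σ) := by
  unfold gaussKernel; fun_prop

lemma gaussKernel_neg (σ x : ℝ) : gaussKernel σ (-x) = gaussKernel σ x := by
  simp [gaussKernel]

lemma antitoneOn_gaussKernel (σ : ℝ) : AntitoneOn (gaussKernel σ) (Set.Ici 0) :=
  fun x hx y _ hxy => exp_le_exp.2 <| div_le_div_of_nonneg_right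
    (neg_le_neg (pow_le_pow_left₀ hx hxy 2)) (by positivity)

lemma gaussKernel_eq_exp_neg_mul_sq (σ x : ℝ) :
    gaussKernel σ x = exp (-(1 / (2 * σ ^ 2)) * x ^ 2) := by
  rw [gaussKernel]; ring_nf

lemma integrable_gaussKernel {σ : ℝ} (hσ : σ ≠ 0) : Integrable (gaussKernel σ) := by
  simp_rw [funext (gaussKernel_eq_exp_neg_mul_sq σ)]
  exact integrable_exp_neg_mul_sq (by positivity)

lemma integral_gaussKernel_mul_left {σ r : ℝ} (hσ : 0 < σ) (hr : 0 < r) :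
    ∫ t, gaussKernel σ (r * t) = √(2 * π) * σ / r := by
  rw [Measure.integral_comp_mul_left (gaussKernel σ) r]
  simp_rw [gaussKernel_eq_exp_neg_mul_sq, integral_gaussian]
  rw [show π / (1 / (2 * σ ^ 2)) = (√(2 * π) * σ) ^ 2 by
    rw [mul_pow, sq_sqrt (by positivity)]; field_simp, sqrt_sq (by positivity),
    abs_of_pos (inv_pos.2 hr), smul_eq_mul]
  field_simp

lemma intervalIntegral_exp_neg_sq_symm_eq_two_mul (a : ℝ) :
    ∫ u in -a..a, exp (-u ^ 2) = 2 * ∫ u in (0 : ℝ)..a, exp (-u ^ 2) := by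
  have hi : ∀ b c : ℝ, IntervalIntegrable (fun u => exp (-u ^ 2)) volume b c :=
    fun b c => (by fun_prop : Continuous fun u : ℝ => exp (-u ^ 2)).intervalIntegrable b c
  have h_neg : ∫ u in -a..0, exp (-u ^ 2) = ∫ u in (0 : ℝ)..a, exp (-u ^ 2) := by
    have := intervalIntegral.integral_comp_neg (a := 0) (b := a) fun u => exp (-u ^ 2)
    simp only [neg_sq, neg_zero] at this
    exact this.symm
  rw [← intervalIntegral.integral_add_adjacent_intervals (hi (-a) 0) (hi 0 a), h_neg, two_mul]

lemma mul_setIntegral_Icc_gaussKernel {σ r : ℝ} (hσ : 0 < σ) (hr : 0 < r) :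
    r / (√(2 * π) * σ) * ∫ t in Set.Icc (-(1 / 2) : ℝ) (1 / 2), gaussKernel σ (r * t)
      = phi σ r := by
  have hc : r / (√2 * σ) ≠ 0 := by positivity
  have h_kernel : ∀ t, gaussKernel σ (r * t) = exp (-(r / (√2 * σ) * t) ^ 2) := fun t => by
    simp only [gaussKernel, mul_pow, div_pow, sq_sqrt zero_le_two]
    congr 1; field_simp
  rw [integral_Icc_eq_integral_Ioc, ← intervalIntegral.integral_of_le (by norm_num)]
  simp_rw [h_kernel]
  rw [intervalIntegral.integral_comp_mul_left (fun u => exp (-u ^ 2)) hc,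
    show r / (√2 * σ) * -(1 / 2) = -(r / (√2 * σ) * (1 / 2)) by ring,
    intervalIntegral_exp_neg_sq_symm_eq_two_mul, phi, erf,
    show r / (√2 * σ) * (1 / 2) = r / (2 * √2 * σ) by ring, smul_eq_mul, sqrt_mul zero_le_two]
  field_simp

lemma exp_neg_sum_sq_div_eq_prod_gaussKernel {ι : Type*} [Fintype ι] (σ : ℝ) (x : ι → ℝ) :
    exp (-(∑ i, x i ^ 2) / (2 * σ ^ 2)) = ∏ i, gaussKernel σ (x i) := by
  simp only [gaussKernel, ← exp_sum, neg_div, sum_div, sum_neg_distrib]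

lemma setIntegral_ite_gaussKernel_mul_add_le {σ r : ℝ} (hr : 0 < r) (b : Bool) (d : ℝ) :
    ∫ t in (if b then Set.Icc (-(1 / 2)) (1 / 2) else Set.univ), gaussKernel σ (r * t + d)
      ≤ ∫ t in (if b then Set.Icc (-(1 / 2)) (1 / 2) else Set.univ), gaussKernel σ (r * t) := by
  cases b
  · simp only [Bool.false_eq_true, if_false, Measure.restrict_univ]
    exact (integral_comp_mul_add_eq_integral_comp_mul (gaussKernel σ) hr.ne' d).le
  · exact setIntegral_Icc_comp_mul_add_le_s6 (continuous_gaussKernel σ) (gaussKernel_neg σ)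
      (antitoneOn_gaussKernel σ) (by norm_num) hr d

lemma mul_setIntegral_ite_gaussKernel {σ r : ℝ} (hσ : 0 < σ) (hr : 0 < r) (b : Bool) :
    r / (√(2 * π) * σ) *
        ∫ t in (if b then Set.Icc (-(1 / 2)) (1 / 2) else Set.univ), gaussKernel σ (r * t)
      = if b then phi σ r else 1 := by
  cases b
  · simp only [Bool.false_eq_true, if_false, Measure.restrict_univ,
      integral_gaussKernel_mul_left hσ hr]
    field_simp
  · exact mul_setIntegral_Icc_gaussKernel hσ hr

lemma prod_add_eq_sum_prod_ite {ι S : Type*} [Fintype ι] [DecidableEq ι] [CommSemiring S]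
    (a b : ι → S) :
    ∏ i, (a i + b i) = ∑ c : ι → Bool, ∏ i, if c i then b i else a i := by
  rw [← Fintype.prod_sum fun i (x : Bool) => if x then b i else a i]
  simp [add_comm]

lemma det_div_mul_setIntegral_pi_exp_le_prod {n : ℕ} {σ : ℝ} (hσ : 0 < σ)
    {R : Matrix (Fin n) (Fin n) ℝ} (hR : R.IsUpperTriangular) (hd : ∀ i, 0 < R i i)
    (c : Fin n → Bool) :
    R.det / (√(2 * π) * σ) ^ n *
        ∫ ξ in Set.univ.pi fun i => if c i then Set.Icc (-(1 / 2) : ℝ) (1 / 2) else Set.univ,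
          exp (-(∑ i, (R *ᵥ ξ) i ^ 2) / (2 * σ ^ 2))
      ≤ ∏ i, if c i then phi σ (R i i) else 1 := by
  have h_det : R.det / (√(2 * π) * σ) ^ n = ∏ i, R i i / (√(2 * π) * σ) := by
    rw [det_of_isUpperTriangular hR, prod_div_distrib, prod_const, card_univ, Fintype.card_fin]
  have h_box := setIntegral_pi_prod_mulVec_add_le (gaussKernel_nonneg σ)
    (integrable_gaussKernel hσ.ne') R hR (fun i => (hd i).ne') _
    (fun i => by split_ifs <;> simp)
    (fun i => setIntegral_ite_gaussKernel_mul_add_le (hd i) (c i)) 0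
  simp only [Pi.zero_apply, add_zero, ← exp_neg_sum_sq_div_eq_prod_gaussKernel] at h_box
  calc _ ≤ R.det / (√(2 * π) * σ) ^ n * ∏ i, ∫ t in (if c i then Set.Icc (-(1 / 2)) (1 / 2)
          else Set.univ), gaussKernel σ (R i i * t) :=
        mul_le_mul_of_nonneg_left h_box
          (h_det ▸ prod_nonneg fun i _ => div_nonneg (hd i).le (by positivity))
    _ = ∏ i, if c i then phi σ (R i i) else 1 := by
        rw [h_det, ← prod_mul_distrib]
        exact prod_congr rfl fun i _ => mul_setIntegral_ite_gaussKernel hσ (hd i) (c i)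

/-- `P_R^BR ≤ P_R^BB`: the success probability of the box-constrained rounding
detector (expanded as a sum over all choices of `ω_i ∈ {α_i, β_i}`, taking the
whole line for `α_i` and `[-1/2,1/2]` for `β_i`) is at most the success
probability of the box-constrained Babai detector. -/
theorem stmt_6 (n : ℕ) (σ : ℝ) (hσ : 0 < σ)
    (R : Matrix (Fin n) (Fin n) ℝ) (hR : R.BlockTriangular id)
    (hd : ∀ i, 0 < R i i) (l u : Fin n → ℤ) (hlu : ∀ i, l i < u i)
    (α β : Fin n → ℝ)
    (hα : ∀ i, α i = 1 / (((u i - l i : ℤ) : ℝ) + 1))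
    (hβ : ∀ i, β i = ((u i - l i : ℤ) : ℝ) / (((u i - l i : ℤ) : ℝ) + 1)) :
    (R.det / (Real.sqrt (2 * Real.pi) * σ) ^ n) *
        ∑ c : Fin n → Bool,
          (∏ i, (if c i then β i else α i)) *
            ∫ ξ in Set.univ.pi
                (fun i => if c i then Set.Icc (-(1 / 2) : ℝ) (1 / 2)
                  else (Set.univ : Set ℝ)),
              Real.exp (-(∑ i, (R.mulVec ξ i) ^ 2) / (2 * σ ^ 2))
      ≤ ∏ i, (α i + β i * phi σ (R i i)) := by
  have h_weight : ∀ c : Fin n → Bool, 0 ≤ ∏ i, (if c i then β i else α i) := fun c =>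
    prod_nonneg fun i _ => by
      have : (0 : ℝ) ≤ ((u i - l i : ℤ) : ℝ) := by exact_mod_cast (sub_pos.2 (hlu i)).le
      split_ifs
      · rw [hβ i]; positivity
      · rw [hα i]; positivity
  calc _ = ∑ c : Fin n → Bool, (∏ i, (if c i then β i else α i)) *
          (R.det / (√(2 * π) * σ) ^ n *
            ∫ ξ in Set.univ.pi fun i => if c i then Set.Icc (-(1 / 2) : ℝ) (1 / 2) else Set.univ,
              exp (-(∑ i, (R *ᵥ ξ) i ^ 2) / (2 * σ ^ 2))) := by
        rw [mul_sum]; simp only [mul_left_comm]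
    _ ≤ ∑ c : Fin n → Bool, (∏ i, (if c i then β i else α i)) *
          ∏ i, if c i then phi σ (R i i) else 1 :=
        sum_le_sum fun c _ => mul_le_mul_of_nonneg_left
          (det_div_mul_setIntegral_pi_exp_le_prod hσ hR hd c) (h_weight c)
    _ = ∏ i, (α i + β i * phi σ (R i i)) := by
        rw [prod_add_eq_sum_prod_ite]
        refine sum_congr rfl fun c _ => ?_
        rw [← prod_mul_distrib]
        refine prod_congr rfl fun i _ => ?_
        split_ifs <;> simp
end

section
/- Let σ = 1 and R = [[2, -1], [0, 1]]. Define P₁ = (2/(2π)) ∫_{-∞}^{1/2} ∫_{-∞}^{1/2} exp(-‖Rξ‖₂²/2) dξ₂ dξ₁ and P₂ = (1/4)(1 + erf(1/(2√2)))(1 + erf(2/(2√2))). Then P₁ > P₂. -/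
open MeasureTheory Real Finset

/-!
Write `H x = ∫_{-∞}^x exp (-t²)` (`gaussIic`), so that `1 + erf x = (2 / √π) H x`.
Completing the square and Fubini turn the right-hand side into
`(1 / π) ∫_{x ≤ 1/2} exp (-x²) H (1/2 - x)`, so the claim is
`H (1 / (2√2)) H (1 / √2) < ∫_{x ≤ 1/2} exp (-x²) H (1/2 - x)`, numerically `1.830 < 1.945`.
Both sides are estimated with `√π ∈ [1.772, 1.773]` and the degree-9 Taylor polynomial of
`∫_0^x exp (-t²)`; the integral is bounded below by a lower Riemann–Stieltjes sum on the nodes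
`-1/2 + i/8` (about `1.862`), which works because `x ↦ H (1/2 - x)` is antitone.
-/

open Set
open scoped Nat

lemma integrable_exp_neg_sq : Integrable fun t : ℝ => exp (-t ^ 2) := by
  simpa using integrable_exp_neg_mul_sq one_pos

noncomputable def gaussIic (x : ℝ) : ℝ := ∫ t in Iic x, exp (-t ^ 2)

lemma gaussIic_sub (a b : ℝ) : gaussIic b - gaussIic a = ∫ t in a..b, exp (-t ^ 2) :=
  intervalIntegral.integral_Iic_sub_Iic integrable_exp_neg_sq.integrableOn
    integrable_exp_neg_sq.integrableOn

lemma gaussIic_zero : gaussIic 0 = √π / 2 := by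
  have hsplit := intervalIntegral.integral_Iic_add_Ioi (b := (0 : ℝ))
    integrable_exp_neg_sq.integrableOn integrable_exp_neg_sq.integrableOn
  have htot : ∫ t : ℝ, exp (-t ^ 2) = √π := by simpa using integral_gaussian 1
  have hIoi : ∫ t in Ioi (0 : ℝ), exp (-t ^ 2) = √π / 2 := by
    simpa using integral_gaussian_Ioi 1
  rw [gaussIic]; linarith

lemma gaussIic_eq (x : ℝ) : gaussIic x = √π / 2 + ∫ t in (0 : ℝ)..x, exp (-t ^ 2) := by
  rw [← gaussIic_sub 0 x, gaussIic_zero]; ring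

lemma one_add_erf (x : ℝ) : 1 + erf x = 2 / √π * gaussIic x := by
  have hπ : √π ≠ 0 := (sqrt_pos.2 pi_pos).ne'
  rw [erf, gaussIic_eq]; field_simp

lemma gaussIic_mono : Monotone gaussIic := fun a b hab => by
  have h := gaussIic_sub a b
  have : 0 ≤ ∫ t in a..b, exp (-t ^ 2) :=
    intervalIntegral.integral_nonneg hab fun t _ => (exp_pos _).le
  linarith

lemma gaussIic_nonneg (x : ℝ) : 0 ≤ gaussIic x :=
  setIntegral_nonneg measurableSet_Iic fun _ _ => (exp_pos _).le

lemma gaussIic_le_sqrt_pi (x : ℝ) : gaussIic x ≤ √π := by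
  have htot : ∫ t : ℝ, exp (-t ^ 2) = √π := by simpa using integral_gaussian 1
  rw [← htot]
  exact setIntegral_le_integral integrable_exp_neg_sq (.of_forall fun _ => (exp_pos _).le)

noncomputable def gaussTaylor (n : ℕ) (x : ℝ) : ℝ :=
  ∑ m ∈ range n, (-1) ^ m / (m ! * (2 * m + 1)) * x ^ (2 * m + 1)

lemma integral_exp_taylor (n : ℕ) (x : ℝ) :
    ∫ t in (0 : ℝ)..x, ∑ m ∈ range n, (-t ^ 2) ^ m / m ! = gaussTaylor n x := by
  rw [intervalIntegral.integral_finsetSum fun m _ =>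
    (by fun_prop : Continuous _).intervalIntegrable _ _]
  refine sum_congr rfl fun m _ => ?_
  have h : ∀ t : ℝ, (-t ^ 2) ^ m / m ! = (-1) ^ m / m ! * t ^ (2 * m) := fun t => by
    rw [neg_pow, ← pow_mul]; ring
  simp only [h, intervalIntegral.integral_const_mul, integral_pow]
  push_cast
  field_simp
  ring

lemma abs_integral_exp_neg_sq_sub_gaussTaylor_le {n : ℕ} (hn : 0 < n) {x : ℝ} (hx : |x| ≤ 1) :
    |(∫ t in (0 : ℝ)..x, exp (-t ^ 2)) - gaussTaylor n x|
      ≤ |x| ^ (2 * n + 1) * ((n + 1) / (n ! * n)) := by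
  rw [← integral_exp_taylor, ← intervalIntegral.integral_sub
    ((by fun_prop : Continuous _).intervalIntegrable _ _)
    ((by fun_prop : Continuous _).intervalIntegrable _ _)]
  have hbound : ∀ t ∈ uIoc 0 x, ‖exp (-t ^ 2) - ∑ m ∈ range n, (-t ^ 2) ^ m / (m !)‖
      ≤ |x| ^ (2 * n) * ((n + 1) / (n ! * n)) := by
    intro t ht
    have htx : |t| ≤ |x| := by
      rcases mem_uIoc.1 ht with h | h <;> rw [abs_le] at * <;>
        constructor <;> cases abs_cases x <;> linarith
    have hsq : |-t ^ 2| = |t| ^ 2 := by rw [abs_neg, abs_pow]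
    have h1 : |-t ^ 2| ≤ 1 := by rw [hsq]; nlinarith [abs_nonneg t]
    have := Real.exp_bound h1 hn
    rw [Real.norm_eq_abs]
    calc _ ≤ |-t ^ 2| ^ n * (n.succ / (n ! * n)) := this
      _ ≤ |x| ^ (2 * n) * ((n + 1) / (n ! * n)) := by
        rw [hsq, ← pow_mul, Nat.cast_succ]
        gcongr
  have := intervalIntegral.norm_integral_le_of_norm_le_const hbound
  rw [Real.norm_eq_abs, sub_zero] at this
  calc _ ≤ _ := this
    _ = _ := by ring

section RiemannStieltjes

variable {ρ g : ℝ → ℝ}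

lemma mul_setIntegral_le_setIntegral_Iic_mul (hρ : Integrable ρ) (hρ0 : ∀ x, 0 ≤ ρ x)
    (hg : Antitone g) (hρg : Integrable fun x => ρ x * g x) {b w : ℝ} (hw : w ≤ g b) :
    w * ∫ x in Iic b, ρ x ≤ ∫ x in Iic b, ρ x * g x := by
  rw [← integral_const_mul]
  refine setIntegral_mono_on (hρ.const_mul w).integrableOn hρg.integrableOn measurableSet_Iic
    fun x hx => ?_
  rw [mul_comm]
  exact mul_le_mul_of_nonneg_left (hw.trans (hg hx)) (hρ0 x)

lemma mul_intervalIntegral_le_intervalIntegral_mul (hρ : Integrable ρ) (hρ0 : ∀ x, 0 ≤ ρ x)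
    (hg : Antitone g) (hρg : Integrable fun x => ρ x * g x) {a b w : ℝ} (hab : a ≤ b)
    (hw : w ≤ g b) :
    w * ∫ x in a..b, ρ x ≤ ∫ x in a..b, ρ x * g x := by
  rw [← intervalIntegral.integral_const_mul]
  refine intervalIntegral.integral_mono_on hab (hρ.const_mul w).intervalIntegrable
    hρg.intervalIntegrable fun x hx => ?_
  rw [mul_comm]
  exact mul_le_mul_of_nonneg_left (hw.trans (hg hx.2)) (hρ0 x)

lemma lowerSum_le_setIntegral_Iic_mul (hρ : Integrable ρ) (hρ0 : ∀ x, 0 ≤ ρ x)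
    (hg : Antitone g) (hρg : Integrable fun x => ρ x * g x) {c w : ℕ → ℝ} (hc : Monotone c)
    (n : ℕ) (hw : ∀ i ≤ n, w i ≤ g (c i)) :
    w 0 * (∫ x in Iic (c 0), ρ x) + ∑ i ∈ range n, w (i + 1) * ∫ x in c i..c (i + 1), ρ x
      ≤ ∫ x in Iic (c n), ρ x * g x := by
  induction n with
  | zero => simpa using mul_setIntegral_le_setIntegral_Iic_mul hρ hρ0 hg hρg (hw 0 le_rfl)
  | succ n ih =>
    have hlast := mul_intervalIntegral_le_intervalIntegral_mul hρ hρ0 hg hρg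
      (hc n.le_succ) (hw (n + 1) le_rfl)
    rw [← intervalIntegral.integral_Iic_sub_Iic hρg.integrableOn hρg.integrableOn] at hlast
    rw [sum_range_succ]
    linarith [ih fun i hi => hw i (hi.trans n.le_succ)]

end RiemannStieltjes

lemma setIntegral_Iic_exp_neg_sq_sub (a x : ℝ) :
    ∫ y in Iic a, exp (-(y - x) ^ 2) = gaussIic (a - x) := by
  have h := (measurePreserving_add_right volume x).setIntegral_preimage_emb
    (MeasurableEquiv.addRight x).measurableEmbedding (fun y => exp (-(y - x) ^ 2)) (Iic a)
  have hpre : (· + x) ⁻¹' Iic a = Iic (a - x) := by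
    ext y; simp [le_sub_iff_add_le]
  simp only [hpre, add_sub_cancel_right] at h
  rw [← h, gaussIic]

lemma integrable_exp_neg_sq_mul_exp_neg_sq_sub :
    Integrable (fun z : ℝ × ℝ => exp (-z.1 ^ 2) * exp (-(z.2 - z.1) ^ 2))
      (volume.prod volume) := by
  have hprod := integrable_exp_neg_sq.mul_prod integrable_exp_neg_sq
  have hshear := measurePreserving_prod_sub (volume : Measure ℝ) (volume : Measure ℝ)
  simpa [Function.comp_def] using (hshear.integrable_comp hprod.aestronglyMeasurable).2 hprod

lemma setIntegral_pi_Iic_eq (a : ℝ) :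
    ∫ ξ in Set.univ.pi (fun _ : Fin 2 => Iic a), exp (-((2 * ξ 0 - ξ 1) ^ 2 + ξ 1 ^ 2) / 2)
      = ∫ x in Iic a, exp (-x ^ 2) * gaussIic (a - x) := by
  have happly (ξ : Fin 2 → ℝ) : MeasurableEquiv.finTwoArrow ξ = (ξ 0, ξ 1) := rfl
  have hpre : MeasurableEquiv.finTwoArrow ⁻¹' (Iic a ×ˢ Iic a)
      = Set.univ.pi (fun _ : Fin 2 => Iic a) := by
    ext ξ
    simp only [Set.mem_preimage, happly, mem_prod, mem_univ_pi, Fin.forall_fin_two]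
  have h := (volume_preserving_finTwoArrow ℝ).setIntegral_preimage_emb
    MeasurableEquiv.finTwoArrow.measurableEmbedding
    (fun z : ℝ × ℝ => exp (-z.1 ^ 2) * exp (-(z.2 - z.1) ^ 2)) (Iic a ×ˢ Iic a)
  rw [hpre] at h
  simp only [happly] at h
  calc _ = ∫ ξ in Set.univ.pi (fun _ : Fin 2 => Iic a),
        exp (-ξ 0 ^ 2) * exp (-(ξ 1 - ξ 0) ^ 2) := by
        refine setIntegral_congr_fun (MeasurableSet.univ_pi fun _ => measurableSet_Iic)
          fun ξ _ => ?_
        -- `((2 a - b) ^ 2 + b ^ 2) / 2 = a ^ 2 + (b - a) ^ 2`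
        rw [← exp_add]; ring_nf
    _ = ∫ x in Iic a, ∫ y in Iic a, exp (-x ^ 2) * exp (-(y - x) ^ 2) := by
        rw [h]
        exact setIntegral_prod _ integrable_exp_neg_sq_mul_exp_neg_sq_sub.integrableOn
    _ = _ := by
        simp only [integral_const_mul, setIntegral_Iic_exp_neg_sq_sub]

lemma integrable_exp_neg_sq_mul_gaussIic (a : ℝ) :
    Integrable fun x => exp (-x ^ 2) * gaussIic (a - x) := by
  refine integrable_exp_neg_sq.mul_bdd (c := √π)
    (gaussIic_mono.measurable.comp (measurable_const.sub measurable_id)).aestronglyMeasurable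
    (.of_forall fun x => ?_)
  rw [norm_of_nonneg (gaussIic_nonneg _)]
  exact gaussIic_le_sqrt_pi _

lemma sqrt_pi_mem_Icc : √π ∈ Icc (1.772 : ℝ) 1.773 := by
  constructor
  · rw [le_sqrt (by norm_num) pi_pos.le]; linarith [pi_gt_d2]
  · rw [sqrt_le_left (by norm_num)]; linarith [pi_lt_d4]

lemma abs_integral_exp_neg_sq_sub_gaussTaylor_five_le {x : ℝ} (hx : |x| ≤ 1) :
    |(∫ t in (0 : ℝ)..x, exp (-t ^ 2)) - gaussTaylor 5 x| ≤ |x| ^ 11 / 100 := by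
  have h := abs_integral_exp_neg_sq_sub_gaussTaylor_le (n := 5) (by norm_num) hx
  norm_num [Nat.factorial] at h
  linarith

lemma lt_setIntegral_Iic_exp_neg_sq_mul_gaussIic :
    1.845 < ∫ x in Iic (1 / 2 : ℝ), exp (-x ^ 2) * gaussIic (1 / 2 - x) := by
  set c : ℕ → ℝ := fun i => -1 / 2 + i / 8 with hc
  have hc8 : c 8 = 1 / 2 := by norm_num [hc]
  have hJ : ∀ x : ℝ, |x| ≤ 1 → _ := fun x hx =>
    abs_le.mp (abs_integral_exp_neg_sq_sub_gaussTaylor_five_le hx)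
  -- Rational weights keep the lower sum linear in `√π` and the `∫ t in 0..c i, exp (-t ^ 2)`.
  have hw : ∀ i ≤ 8, 1.772 / 2 + gaussTaylor 5 (1 / 2 - c i) - |1 / 2 - c i| ^ 11 / 100
      ≤ gaussIic (1 / 2 - c i) := fun i hi => by
    have hi8 : (i : ℝ) ≤ 8 := by exact_mod_cast hi
    have hi0 : (0 : ℝ) ≤ i := i.cast_nonneg
    have := hJ (1 / 2 - c i)
      (abs_le.mpr ⟨by simp only [hc]; linarith, by simp only [hc]; linarith⟩)
    rw [gaussIic_eq]
    linarith [sqrt_pi_mem_Icc.1]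
  have hsum := lowerSum_le_setIntegral_Iic_mul integrable_exp_neg_sq (fun _ => (exp_pos _).le)
    (fun a b hab => gaussIic_mono (by linarith : 1 / 2 - b ≤ 1 / 2 - a))
    (integrable_exp_neg_sq_mul_gaussIic (1 / 2))
    (fun i j hij => by simp only [hc]; gcongr) 8 hw
  simp only [← gaussIic_sub, hc8] at hsum
  refine lt_of_lt_of_le ?_ hsum
  change _ < _ * gaussIic _ + _
  simp only [gaussIic_eq, sum_range_succ, sum_range_zero]
  have h0 := hJ (c 0) (by norm_num [hc])
  have h1 := hJ (c 1) (by norm_num [hc, abs_le])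
  have h2 := hJ (c 2) (by norm_num [hc, abs_le])
  have h3 := hJ (c 3) (by norm_num [hc, abs_le])
  have h4 := hJ (c 4) (by norm_num [hc, abs_le])
  have h5 := hJ (c 5) (by norm_num [hc, abs_le])
  have h6 := hJ (c 6) (by norm_num [hc, abs_le])
  have h7 := hJ (c 7) (by norm_num [hc, abs_le])
  have h8 := hJ (c 8) (by norm_num [hc, abs_le])
  norm_num [hc, gaussTaylor, sum_range_succ, Nat.factorial] at h0 h1 h2 h3 h4 h5 h6 h7 h8 ⊢
  linarith [sqrt_pi_mem_Icc.1]

lemma gaussIic_mul_gaussIic_lt :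
    gaussIic (1 / (2 * √2)) * gaussIic (2 / (2 * √2)) < 1.845 := by
  have hle {x r : ℝ} (hxr : x ≤ r) (hr : |r| ≤ 1) :
      gaussIic x ≤ 1.773 / 2 + gaussTaylor 5 r + |r| ^ 11 / 100 := by
    refine (gaussIic_mono hxr).trans ?_
    rw [gaussIic_eq]
    linarith [(abs_le.mp (abs_integral_exp_neg_sq_sub_gaussTaylor_five_le hr)).2,
      sqrt_pi_mem_Icc.2]
  have hsqrt2 : 1.414 ≤ √2 := by rw [le_sqrt (by norm_num) (by norm_num)]; norm_num
  have ha : 1 / (2 * √2) ≤ 0.354 := by rw [div_le_iff₀ (by positivity)]; linarith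
  have hb : 2 / (2 * √2) ≤ 0.708 := by rw [div_le_iff₀ (by positivity)]; linarith
  calc _ ≤ (1.773 / 2 + gaussTaylor 5 0.354 + |0.354| ^ 11 / 100)
        * (1.773 / 2 + gaussTaylor 5 0.708 + |0.708| ^ 11 / 100) :=
        mul_le_mul (hle ha (by norm_num [abs_le])) (hle hb (by norm_num [abs_le]))
          (gaussIic_nonneg _) ((gaussIic_nonneg _).trans (hle ha (by norm_num [abs_le])))
    _ < 1.845 := by norm_num [gaussTaylor, sum_range_succ, Nat.factorial]

/-- Example: with `σ = 1`, `R = [[2,-1],[0,1]]` and the parameter at the lower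
corner of the box, the success probability of the box-constrained rounding
detector exceeds that of the box-constrained Babai detector. -/
theorem stmt_16 :
    (1 / 4 : ℝ) * (1 + erf (1 / (2 * Real.sqrt 2)))
        * (1 + erf (2 / (2 * Real.sqrt 2)))
      < (2 / (2 * Real.pi)) *
        ∫ ξ in Set.univ.pi (fun _ : Fin 2 => Set.Iic (1 / 2 : ℝ)),
          Real.exp (-((2 * ξ 0 - ξ 1) ^ 2 + (ξ 1) ^ 2) / 2) := by
  rw [one_add_erf, one_add_erf, setIntegral_pi_Iic_eq]
  have key := gaussIic_mul_gaussIic_lt.trans lt_setIntegral_Iic_exp_neg_sq_mul_gaussIic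
  have hπ : √π ^ 2 = π := sq_sqrt pi_pos.le
  calc _ = gaussIic (1 / (2 * √2)) * gaussIic (2 / (2 * √2)) / π := by
        field_simp; rw [hπ]; ring
    _ < (∫ x in Iic (1 / 2 : ℝ), exp (-x ^ 2) * gaussIic (1 / 2 - x)) / π :=
        div_lt_div_of_pos_right key pi_pos
    _ = _ := by field_simp
end
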